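/- arXiv:1208.3393 — 2 statements merged into one kernel-verified Lean document; each statement's English description precedes it below -/
import Mathlib

section
/- Let $x \geq 1$ be a real number and $p$ a positive integer. For any integer $k$ with $-(p-1)/2 \le k \le (p-1)/2$, define $F_k(x) = \sum_{r \in \mathbb{Z}} \exp\left(-\pi \left(\frac{k}{p} + r\right)^2 x^2\right)$. Then there is an absolute constant $C > 0$ such that $F_k(x) \le C \exp\left(-\frac{|k|}{p} x\right)$. -/
open Real

noncomputable def F (p : ℕ) (k : ℤ) (x : ℝ) : ℝ :=
  ∑' r : ℤ, Real.exp (-π * ((k : ℝ) / p + r) ^ 2 * x ^ 2)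

/-!
Put `t = k / p`, so `|t| ≤ 1/2`. Then `t` is a point of `t + ℤ` closest to `0`, so
`|t| ≤ |t + r|` and hence `|r| ≤ |t + r| + |t| ≤ 2 |t + r|` for every integer `r`. With `x ≥ 1`
this yields the termwise bound `exp (-π (t + r)² x²) ≤ e · exp (-|t| x) · exp (-r² / 4)`, and the
Gaussian `∑ exp (-r² / 4)` over `ℤ` converges.
-/

lemma summable_exp_neg_mul_int_sq {a : ℝ} (ha : 0 < a) :
    Summable fun n : ℤ ↦ exp (-a * n ^ 2) := by
  refine (summable_pow_mul_jacobiTheta₂_term_bound 0 (div_pos ha pi_pos) 0).congr fun n ↦ ?_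
  rw [pow_zero, one_mul]
  congr 1
  field_simp
  ring

section ShiftedInteger

variable {t : ℝ} (ht : |t| ≤ 1 / 2) (r : ℤ)
include ht

lemma abs_le_abs_add_intCast : |t| ≤ |t + r| := by
  rcases eq_or_ne r 0 with rfl | hr
  · simp
  have hr : (1 : ℝ) ≤ |(r : ℝ)| := by exact_mod_cast Int.one_le_abs hr
  have := abs_add_le (t + r) (-t)
  rw [add_neg_cancel_comm, abs_neg] at this
  linarith

lemma abs_intCast_le_two_mul_abs_add : |(r : ℝ)| ≤ 2 * |t + r| := by
  have := abs_add_le (t + r) (-t)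
  rw [add_neg_cancel_comm, abs_neg] at this
  linarith [abs_le_abs_add_intCast ht r]

lemma exp_neg_pi_mul_add_intCast_sq_le {x : ℝ} (hx : 1 ≤ x) :
    exp (-π * (t + r) ^ 2 * x ^ 2) ≤
      exp 1 * exp (-(|t| * x)) * exp (-(1 / 4) * (r : ℝ) ^ 2) := by
  rw [← exp_add, ← exp_add, exp_le_exp]
  set s := |t + r|
  have hts : |t| * x ≤ s * x :=
    mul_le_mul_of_nonneg_right (abs_le_abs_add_intCast ht r) (by linarith)
  have hrs : (r : ℝ) ^ 2 / 4 ≤ s ^ 2 := by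
    nlinarith [abs_intCast_le_two_mul_abs_add ht r, sq_abs (r : ℝ), abs_nonneg (r : ℝ)]
  have hsx : s ^ 2 ≤ (s * x) ^ 2 := by
    rw [mul_pow]; exact le_mul_of_one_le_right (sq_nonneg s) (one_le_pow₀ hx)
  have hsq : (t + r) ^ 2 * x ^ 2 = (s * x) ^ 2 := by rw [mul_pow, sq_abs]
  -- `π u² + 1 ≥ 2u² + 1 ≥ u + u²` for `u = s x`
  nlinarith [pi_gt_three, sq_nonneg (s * x), sq_nonneg (s * x - 1)]

lemma tsum_exp_neg_pi_mul_add_intCast_sq_le {x : ℝ} (hx : 1 ≤ x) :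
    ∑' r : ℤ, exp (-π * (t + r) ^ 2 * x ^ 2) ≤
      (exp 1 * ∑' r : ℤ, exp (-(1 / 4) * (r : ℝ) ^ 2)) * exp (-(|t| * x)) := by
  have hle r := exp_neg_pi_mul_add_intCast_sq_le ht r hx
  have hmajorant := (summable_exp_neg_mul_int_sq (a := 1 / 4) (by norm_num)).mul_left
    (exp 1 * exp (-(|t| * x)))
  calc ∑' r : ℤ, exp (-π * (t + r) ^ 2 * x ^ 2)
      ≤ ∑' r : ℤ, exp 1 * exp (-(|t| * x)) * exp (-(1 / 4) * (r : ℝ) ^ 2) :=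
        (hmajorant.of_nonneg_of_le (fun _ ↦ (exp_pos _).le) hle).tsum_le_tsum hle hmajorant
    _ = (exp 1 * ∑' r : ℤ, exp (-(1 / 4) * (r : ℝ) ^ 2)) * exp (-(|t| * x)) := by
        rw [tsum_mul_left]; ring

end ShiftedInteger

theorem F_bound :
    ∃ C > 0, ∀ (x : ℝ), 1 ≤ x → ∀ (p : ℕ), 0 < p → ∀ k : ℤ,
      |(k : ℝ)| ≤ ((p : ℝ) - 1) / 2 →
      F p k x ≤ C * Real.exp (-(|(k : ℝ)| / p) * x) := by
  refine ⟨exp 1 * ∑' r : ℤ, exp (-(1 / 4) * (r : ℝ) ^ 2),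
    mul_pos (exp_pos 1) ((summable_exp_neg_mul_int_sq (by norm_num)).tsum_pos
      (fun _ ↦ (exp_pos _).le) 0 (exp_pos _)), fun x hx p hp k hk ↦ ?_⟩
  have hp : (0 : ℝ) < p := by exact_mod_cast hp
  have habs : |(k : ℝ) / p| = |(k : ℝ)| / p := by rw [abs_div, abs_of_pos hp]
  have ht : |(k : ℝ) / p| ≤ 1 / 2 := by
    rw [habs, div_le_iff₀ hp]; linarith
  rw [neg_mul, ← habs]
  exact tsum_exp_neg_pi_mul_add_intCast_sq_le ht hx
end

section
/- Let $p$ be a prime and let $X, x$ be reals with $X \ge x \ge 1$ and $X \le p$. Let $k_0$ be a fixed integer, $J \geq 1$, and define $F_k(x) = \sum_{r \in \mathbb{Z}} \exp(-\pi (k/p + r)^2 x^2)$. Then for any real $\beta$, there is an absolute constant $C > 0$ with $\sum_{k = -(p-1)/2}^{(p-1)/2} F_k(x) \min\left\{ \left\| \frac{kX}{p} + \beta \right\|^{-1}, J \right\} \le C\left( \frac{X}{x} J + \frac{p}{x} \log p \right)$, where $\|z\|$ is the distance to the nearest integer and $\|z\|^{-1}$ is interpreted as $+\infty$ (so the min equals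 $J$) when $z$ is an integer. -/
/-!
Since `|k/p| ≤ 1/2`, the theta sum `F p k x` is dominated by its `r = 0` term, which decays like
`exp (-π |k| x / p)`. Put `θ = X / p` and group the `k` according to the integer `m` nearest to
`k θ + β`. Within one group, let `k₀` minimise `|k θ + β - m|`; every other `k` has
`|k θ + β - m| ≥ |k - k₀| θ / 2`, so the group contributes at most `J + O((p / X) log p)`
(harmonic sum). On the group of `m` the weight is `≲ exp (-π (x / X) |m - round β|)`, and these
weights sum to `O(X / x)`.
-/

open Real
open scoped Classical

/-- distance to the nearest integer -/
noncomputable def nint (z : ℝ) : ℝ := |z - round z|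

open Finset

lemma summable_exp_neg_pi_mul_sq_div_eight : Summable fun r : ℤ => exp (-π * r ^ 2 / 8) := by
  convert summable_pow_mul_jacobiTheta₂_term_bound 0 (T := 1 / 8) (by norm_num) 0 using 2 with r
  ring_nf

lemma half_sq_add_sq_div_eight_le_sq_add_int {q : ℝ} (hq : |q| ≤ 1 / 2) (r : ℤ) :
    q ^ 2 / 2 + r ^ 2 / 8 ≤ (q + r) ^ 2 := by
  have hq' := abs_le.mp hq
  rcases eq_or_ne r 0 with rfl | hr
  · simp only [Int.cast_zero]; nlinarith
  · have hr1 : (1 : ℝ) ≤ r ^ 2 := by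
      have : (1 : ℤ) ≤ r ^ 2 := by nlinarith [Int.one_le_abs hr, sq_abs r]
      exact_mod_cast this
    -- `|q + r| ≥ |r| - 1/2 ≥ |r| / 2`
    nlinarith [sq_abs (r : ℝ), abs_nonneg (r : ℝ), sq_nonneg ((r : ℝ) + 2 * q)]

lemma exp_neg_half_pi_sq_le (y : ℝ) : exp (-π / 2 * y ^ 2) ≤ exp (π / 2) * exp (-π * |y|) := by
  rw [← exp_add, exp_le_exp]
  nlinarith [pi_pos, sq_abs y, sq_nonneg (|y| - 1)]

lemma tsum_exp_neg_pi_sq_add_int_le {q x : ℝ} (hq : |q| ≤ 1 / 2) (hx : 1 ≤ x) :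
    ∑' r : ℤ, exp (-π * (q + r) ^ 2 * x ^ 2)
      ≤ (∑' r : ℤ, exp (-π * r ^ 2 / 8)) * exp (π / 2) * exp (-π * |q * x|) := by
  have hterm : ∀ r : ℤ, exp (-π * (q + r) ^ 2 * x ^ 2)
      ≤ exp (-π * r ^ 2 / 8) * exp (-π / 2 * (q * x) ^ 2) := by
    intro r
    rw [← exp_add, exp_le_exp]
    have h := half_sq_add_sq_div_eight_le_sq_add_int hq r
    have hx2 : 1 ≤ x ^ 2 := by nlinarith
    have : q ^ 2 / 2 * x ^ 2 + r ^ 2 / 8 ≤ (q + r) ^ 2 * x ^ 2 := by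
      nlinarith [mul_le_mul_of_nonneg_left hx2 (sq_nonneg (r : ℝ))]
    nlinarith [pi_pos]
  have hsum := summable_exp_neg_pi_mul_sq_div_eight.mul_right (exp (-π / 2 * (q * x) ^ 2))
  calc _ ≤ (∑' r : ℤ, exp (-π * r ^ 2 / 8)) * exp (-π / 2 * (q * x) ^ 2) := by
        rw [← tsum_mul_right]
        exact (hsum.of_nonneg_of_le (fun _ => (exp_pos _).le) hterm).tsum_le_tsum hterm hsum
    _ ≤ _ := by
        grw [exp_neg_half_pi_sq_le, mul_assoc]

-- `min ‖z‖⁻¹ J` with `‖z‖⁻¹ = ∞` at integers; the `if` is needed because `0⁻¹ = 0` in Lean.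
noncomputable def truncInvDist (J z : ℝ) : ℝ :=
  if ∃ m : ℤ, z = m then J else min (nint z)⁻¹ J

lemma truncInvDist_nonneg {J : ℝ} (hJ : 0 ≤ J) (z : ℝ) : 0 ≤ truncInvDist J z := by
  unfold truncInvDist nint
  split_ifs
  exacts [hJ, le_min (by positivity) hJ]

lemma truncInvDist_le (J z : ℝ) : truncInvDist J z ≤ J := by
  unfold truncInvDist
  split_ifs
  exacts [le_rfl, min_le_right _ _]

lemma truncInvDist_le_inv_abs_sub_round (J : ℝ) {z : ℝ} (hz : z ≠ round z) :
    truncInvDist J z ≤ |z - round z|⁻¹ := by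
  have hz' : ¬ ∃ m : ℤ, z = m := by
    rintro ⟨m, rfl⟩
    exact hz (by rw [round_intCast])
  rw [truncInvDist, if_neg hz']
  exact min_le_left _ _

lemma sum_comp_natAbs_sub_le (t : Finset ℤ) (a : ℤ) {f : ℕ → ℝ} (hf : ∀ d, 0 ≤ f d) :
    ∑ k ∈ t, f (k - a).natAbs ≤ 2 * ∑ d ∈ t.image (fun k => (k - a).natAbs), f d := by
  rw [← sum_fiberwise_of_maps_to (fun k hk => mem_image_of_mem (fun k => (k - a).natAbs) hk),
    mul_sum]
  refine sum_le_sum fun d _ => ?_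
  have hfiber : {k ∈ t | (k - a).natAbs = d} ⊆ {a + d, a - d} := by
    intro k hk
    simp only [mem_filter] at hk
    simp only [mem_insert, mem_singleton]
    omega
  calc ∑ k ∈ t with (k - a).natAbs = d, f (k - a).natAbs
      = #{k ∈ t | (k - a).natAbs = d} * f d := by
        rw [sum_congr rfl fun k hk => by rw [(mem_filter.mp hk).2], sum_const, nsmul_eq_mul]
    _ ≤ 2 * f d := by
        gcongr
        · exact hf d
        · exact_mod_cast (card_le_card hfiber).trans card_le_two

lemma sum_inv_natAbs_sub_le (t : Finset ℤ) (a : ℤ) {N : ℕ} (ht : ∀ k ∈ t, |k - a| ≤ N) :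
    ∑ k ∈ t, ((k - a).natAbs : ℝ)⁻¹ ≤ 2 * (1 + log N) := by
  have himage : t.image (fun k => (k - a).natAbs) ⊆ range (N + 1) := by
    intro d hd
    obtain ⟨k, hk, rfl⟩ := mem_image.mp hd
    have := abs_le.mp (ht k hk)
    rw [mem_range]
    omega
  calc ∑ k ∈ t, ((k - a).natAbs : ℝ)⁻¹
      ≤ 2 * ∑ d ∈ range (N + 1), (d : ℝ)⁻¹ := by
        grw [sum_comp_natAbs_sub_le t a (f := fun d => (d : ℝ)⁻¹) (fun d => by positivity)]
        gcongr
    _ = 2 * harmonic N := by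
        rw [sum_range_succ', harmonic]
        push_cast
        simp
    _ ≤ 2 * (1 + log N) := by gcongr; exact harmonic_le_one_add_log N

lemma sum_exp_neg_mul_le (s : Finset ℕ) {c : ℝ} (hc : 0 < c) :
    ∑ d ∈ s, exp (-c * d) ≤ 1 + 1 / c := by
  have hρ0 : 0 ≤ exp (-c) := (exp_pos _).le
  have hρ1 : exp (-c) < 1 := exp_lt_one_iff.mpr (by linarith)
  have hpow : ∀ d : ℕ, exp (-c * d) = exp (-c) ^ d := fun d => by
    rw [← exp_nat_mul, mul_comm]
  simp_rw [hpow]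
  calc ∑ d ∈ s, exp (-c) ^ d ≤ ∑' d : ℕ, exp (-c) ^ d :=
        Summable.sum_le_tsum s (fun _ _ => by positivity) (summable_geometric_of_lt_one hρ0 hρ1)
    _ = (1 - exp (-c))⁻¹ := tsum_geometric_of_lt_one hρ0 hρ1
    _ ≤ 1 + 1 / c := by
        have h1 : c + 1 ≤ exp c := add_one_le_exp c
        rw [inv_le_iff_one_le_mul₀ (by rw [sub_pos]; exact hρ1), exp_neg]
        have hec : 0 < exp c := exp_pos c
        field_simp
        nlinarith

lemma sum_le_of_le_inv_abs_affine {θ c J : ℝ} (hθ : 0 < θ) (hJ : 0 ≤ J) {N : ℕ} {s : Finset ℤ}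
    (hs : ∀ k ∈ s, ∀ k' ∈ s, |k - k'| ≤ N) {g : ℤ → ℝ} (hgJ : ∀ k ∈ s, g k ≤ J)
    (hg : ∀ k ∈ s, k * θ + c ≠ 0 → g k ≤ |k * θ + c|⁻¹) :
    ∑ k ∈ s, g k ≤ J + 4 / θ * (1 + log N) := by
  rcases s.eq_empty_or_nonempty with rfl | hne
  · simp only [sum_empty]; positivity
  obtain ⟨k₀, hk₀, hmin⟩ := s.exists_min_image (fun k => |k * θ + c|) hne
  have hfar : ∀ k ∈ s.erase k₀, g k ≤ 2 / θ * ((k - k₀).natAbs : ℝ)⁻¹ := by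
    intro k hk
    obtain ⟨hne, hks⟩ := mem_erase.mp hk
    have hd : (1 : ℝ) ≤ (k - k₀).natAbs := by
      exact_mod_cast Int.natAbs_pos.mpr (sub_ne_zero.mpr hne)
    have hgap : (k - k₀).natAbs * θ ≤ 2 * |k * θ + c| := by
      have : ((k - k₀).natAbs : ℝ) * θ = |(k * θ + c) - (k₀ * θ + c)| := by
        rw [Nat.cast_natAbs, Int.cast_abs, ← abs_of_pos hθ, ← abs_mul, abs_of_pos hθ]
        push_cast; ring_nf
      linarith [abs_sub (k * θ + c) (k₀ * θ + c), hmin k hks]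
    calc g k ≤ |k * θ + c|⁻¹ := hg k hks (abs_pos.mp (by nlinarith))
      _ ≤ ((k - k₀).natAbs * θ / 2)⁻¹ := inv_anti₀ (by positivity) (by linarith)
      _ = 2 / θ * ((k - k₀).natAbs : ℝ)⁻¹ := by field_simp
  calc ∑ k ∈ s, g k = g k₀ + ∑ k ∈ s.erase k₀, g k := (add_sum_erase s g hk₀).symm
    _ ≤ J + 2 / θ * ∑ k ∈ s.erase k₀, ((k - k₀).natAbs : ℝ)⁻¹ := by
        rw [mul_sum]
        exact add_le_add (hgJ k₀ hk₀) (sum_le_sum hfar)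
    _ ≤ J + 2 / θ * (2 * (1 + log N)) := by
        gcongr
        exact sum_inv_natAbs_sub_le _ _ fun k hk => hs k (mem_of_mem_erase hk) k₀ hk₀
    _ = J + 4 / θ * (1 + log N) := by ring

lemma natAbs_round_add_sub_round_le (y β : ℝ) :
    ((round (y + β) - round β).natAbs : ℝ) ≤ |y| + 1 := by
  have h₁ := abs_le.mp (abs_sub_round (y + β))
  have h₂ := abs_le.mp (abs_sub_round β)
  rw [Nat.cast_natAbs, Int.cast_abs, Int.cast_sub, abs_le']
  constructor <;> cases abs_cases y <;> linarith

theorem sum_exp_mul_truncInvDist_le {θ β J c : ℝ} (hθ : 0 < θ) (hJ : 0 ≤ J) (hc : 0 < c)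
    {N : ℕ} {K : Finset ℤ} (hK : ∀ k ∈ K, ∀ k' ∈ K, |k - k'| ≤ N) :
    ∑ k ∈ K, exp (-c * |k * θ|) * truncInvDist J (k * θ + β)
      ≤ 2 * exp c * (1 + 1 / c) * (J + 4 / θ * (1 + log N)) := by
  set B := J + 4 / θ * (1 + log N)
  set m : ℤ → ℤ := fun k => round (k * θ + β)
  set a := round β
  have hfiber : ∀ n, ∑ k ∈ K with m k = n, truncInvDist J (k * θ + β) ≤ B := by
    intro n
    refine sum_le_of_le_inv_abs_affine (c := β - n) hθ hJ
      (fun k hk k' hk' => hK k (mem_filter.mp hk).1 k' (mem_filter.mp hk').1)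
      (fun k _ => truncInvDist_le J _) fun k hk hne => ?_
    have hround : round (k * θ + β) = n := (mem_filter.mp hk).2
    have hsub : k * θ + (β - n) = k * θ + β - round (k * θ + β) := by rw [hround]; ring
    rw [hsub] at hne ⊢
    exact truncInvDist_le_inv_abs_sub_round J (sub_ne_zero.mp hne)
  have hweight : ∀ k : ℤ, exp (-c * |k * θ|) ≤ exp c * exp (-c * (m k - a).natAbs) := by
    intro k
    rw [← exp_add, exp_le_exp]
    nlinarith [natAbs_round_add_sub_round_le (k * θ) β]
  calc ∑ k ∈ K, exp (-c * |k * θ|) * truncInvDist J (k * θ + β)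
      = ∑ n ∈ K.image m, ∑ k ∈ K with m k = n, exp (-c * |k * θ|) * truncInvDist J (k * θ + β) :=
        (sum_fiberwise_of_maps_to (fun k hk => mem_image_of_mem m hk) _).symm
    _ ≤ ∑ n ∈ K.image m, exp c * exp (-c * (n - a).natAbs) * B := by
        refine sum_le_sum fun n _ => ?_
        calc _ ≤ ∑ k ∈ K with m k = n,
                exp c * exp (-c * (n - a).natAbs) * truncInvDist J (k * θ + β) := by
              refine sum_le_sum fun k hk => ?_
              rw [← (mem_filter.mp hk).2]
              exact mul_le_mul_of_nonneg_right (hweight k) (truncInvDist_nonneg hJ _)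
          _ ≤ _ := by
              rw [← mul_sum]
              exact mul_le_mul_of_nonneg_left (hfiber n) (by positivity)
    _ = exp c * B * ∑ n ∈ K.image m, exp (-c * (n - a).natAbs) := by
        rw [mul_sum]; exact sum_congr rfl fun _ _ => by ring
    _ ≤ exp c * B * (2 * (1 + 1 / c)) := by
        have hB : 0 ≤ B := by positivity
        gcongr
        calc _ ≤ 2 * ∑ d ∈ (K.image m).image (fun n => (n - a).natAbs), exp (-c * d) :=
              sum_comp_natAbs_sub_le _ a (f := fun d => exp (-c * d)) fun _ => (exp_pos _).le
          _ ≤ 2 * (1 + 1 / c) := by gcongr; exact sum_exp_neg_mul_le _ hc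
    _ = 2 * exp c * (1 + 1 / c) * B := by ring

lemma exp_mul_one_add_inv_mul_le {p X x J : ℝ} (hp : 2 ≤ p) (hx : 1 ≤ x) (hxX : x ≤ X)
    (hJ : 0 ≤ J) :
    2 * exp (π * x / X) * (1 + 1 / (π * x / X)) * (J + 4 / (X / p) * (1 + log p))
      ≤ 48 * exp π * (X / x * J + p / x * log p) := by
  have hX0 : 0 < X := by linarith
  have hlog0 : 0 ≤ log p := log_nonneg (by linarith)
  have hexp : exp (π * x / X) ≤ exp π := exp_le_exp.mpr (by
    rw [mul_div_assoc]; exact mul_le_of_le_one_right pi_pos.le ((div_le_one hX0).mpr hxX))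
  have hXx : 1 ≤ X / x := (one_le_div (by linarith)).mpr hxX
  have hgeom : 1 + 1 / (π * x / X) ≤ 2 * (X / x) := by
    have : 1 / (π * x / X) ≤ X / x := by
      rw [one_div_div]
      exact div_le_div_of_nonneg_left hX0.le (by linarith) (by nlinarith [pi_gt_three])
    linarith
  have hharm : 4 / (X / p) * (1 + log p) ≤ 12 * (p / X) * log p := by
    have hlog : 1 + log p ≤ 3 * log p := by
      linarith [log_le_log two_pos hp, log_two_gt_d9]
    have hpX : 0 ≤ p / X := by positivity
    rw [div_div_eq_mul_div, mul_div_assoc]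
    linarith [mul_le_mul_of_nonneg_left hlog hpX]
  calc _ ≤ 2 * exp π * (2 * (X / x)) * (J + 12 * (p / X) * log p) := by
        gcongr
    _ = 4 * exp π * (X / x * J + 12 * (p / x * log p)) := by
        rw [← show X / x * (p / X) = p / x by field_simp]; ring
    _ ≤ _ := by
        have : 0 ≤ exp π * (X / x * J) := by positivity
        nlinarith

lemma sum_exp_mul_truncInvDist_le_log {p : ℕ} (hp : 2 ≤ p) {X x J : ℝ} (hx : 1 ≤ x)
    (hxX : x ≤ X) (hJ : 0 ≤ J) (β : ℝ) {K : Finset ℤ} (hK : ∀ k ∈ K, 2 * |k| ≤ p) :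
    ∑ k ∈ K, exp (-π * |k / p * x|) * truncInvDist J (k * (X / p) + β)
      ≤ 48 * exp π * (X / x * J + p / x * log p) := by
  have hX0 : 0 < X := by linarith
  have hdiam : ∀ k ∈ K, ∀ k' ∈ K, |k - k'| ≤ (p : ℤ) := fun k hk k' hk' => by
    linarith [hK k hk, hK k' hk', abs_sub k k']
  have hweight : ∀ k : ℤ, -π * |k / p * x| = -(π * x / X) * |k * (X / p)| := fun k => by
    rw [abs_mul, abs_mul, abs_div, abs_div, abs_of_pos hX0, abs_of_pos (by linarith : 0 < x),
      Nat.abs_cast]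
    field_simp
  simp_rw [hweight]
  grw [sum_exp_mul_truncInvDist_le (by positivity) hJ (by positivity) hdiam]
  exact exp_mul_one_add_inv_mul_le (by exact_mod_cast hp) hx hxX hJ

theorem F_min_sum_bound :
    ∃ C > 0, ∀ (p : ℕ), p.Prime → Odd p → ∀ (X x : ℝ), 1 ≤ x → x ≤ X → X ≤ p →
      ∀ (J : ℕ), 1 ≤ J → ∀ (β : ℝ),
      ∑ k ∈ Finset.Icc (-(((p : ℤ) - 1) / 2)) (((p : ℤ) - 1) / 2),
          F p k x * (if ∃ m : ℤ, (k : ℝ) * X / p + β = m then (J : ℝ)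
            else min ((nint ((k : ℝ) * X / p + β))⁻¹) (J : ℝ))
        ≤ C * (X / x * J + (p : ℝ) / x * Real.log p) := by
  set C₀ := (∑' r : ℤ, exp (-π * r ^ 2 / 8)) * exp (π / 2)
  have hC₀ : 0 < C₀ := mul_pos (summable_exp_neg_pi_mul_sq_div_eight.tsum_pos
    (fun _ => (exp_pos _).le) 0 (exp_pos _)) (exp_pos _)
  refine ⟨C₀ * (48 * exp π), by positivity, fun p hp _ X x hx hxX _ J _ β => ?_⟩
  set K := Icc (-(((p : ℤ) - 1) / 2)) (((p : ℤ) - 1) / 2)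
  have hK : ∀ k ∈ K, 2 * |k| ≤ p := fun k hk => by
    have := mem_Icc.mp hk
    cases abs_cases k <;> omega
  have hF : ∀ k ∈ K, F p k x ≤ C₀ * exp (-π * |k / p * x|) := fun k hk => by
    have : 2 * |(k : ℝ)| ≤ p := by exact_mod_cast hK k hk
    refine tsum_exp_neg_pi_sq_add_int_le ?_ hx
    rw [abs_div, Nat.abs_cast, div_le_iff₀ (by exact_mod_cast hp.pos)]
    linarith
  calc _ = ∑ k ∈ K, F p k x * truncInvDist J (k * (X / p) + β) := by
          simp_rw [mul_div_assoc]; rfl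
    _ ≤ C₀ * ∑ k ∈ K, exp (-π * |k / p * x|) * truncInvDist J (k * (X / p) + β) := by
        rw [mul_sum]
        refine sum_le_sum fun k hk => ?_
        rw [← mul_assoc]
        exact mul_le_mul_of_nonneg_right (hF k hk) (truncInvDist_nonneg (by positivity) _)
    _ ≤ C₀ * (48 * exp π * (X / x * J + p / x * log p)) := by
        gcongr
        exact sum_exp_mul_truncInvDist_le_log hp.two_le hx hxX (by positivity) β hK
    _ = _ := by ring
end
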